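/- Given λ ≥ 1, ε > 0, and a positive integer k, there exists a positive integer n such that in every real Banach space, every λ-triangular (finite) sequence of length at least n has a subsequence of length k which is ((λ² + 1)/2 + ε)-wide-(s). -/

import Mathlib

open Finset Filter Metric NormedSpace

noncomputable section

universe u

variable {X Y : Type*} [NormedAddCommGroup X] [NormedSpace ℝ X]
  [NormedAddCommGroup Y] [NormedSpace ℝ Y]

/-- `b` is a `lam`-basic sequence of length `N`. -/
def IsBasicFinWith (lam : ℝ) (N : ℕ) (b : ℕ → X) : Prop :=
  ∀ (c : ℕ → ℝ) (k n : ℕ), k ≤ n → n ≤ N →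
    ‖∑ j ∈ Finset.range k, c j • b j‖ ≤ lam * ‖∑ j ∈ Finset.range n, c j • b j‖

/-- `b` is a `lam`-wide-(s) sequence of length `N`. -/
def IsWideSFinWith (lam : ℝ) (N : ℕ) (b : ℕ → X) : Prop :=
  IsBasicFinWith (2 * lam) N b ∧ (∀ j, j < N → ‖b j‖ ≤ lam) ∧
    ∀ (c : ℕ → ℝ) (k n : ℕ), k ≤ n → n ≤ N →
      |∑ j ∈ Finset.Ico k n, c j| ≤ lam * ‖∑ j ∈ Finset.range n, c j • b j‖

/-- `b` is a `lam`-triangular sequence of length `N`. -/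
def IsTriangularFinWith (lam : ℝ) (N : ℕ) (b : ℕ → X) : Prop :=
  ∃ f : ℕ → (X →L[ℝ] ℝ),
    (∀ i j, i ≤ j → j < N → f i (b j) = 1) ∧
      (∀ i j, j < i → i < N → f i (b j) = 0) ∧
      (∀ j, j < N → ‖f j‖ ≤ lam) ∧ (∀ j, j < N → ‖b j‖ ≤ lam)

/-! ### Auxiliary material for the proof -/

/-- A choice of norming functional. -/
noncomputable def normF (x : X) : X →L[ℝ] ℝ := (exists_dual_vector'' ℝ x).choose

lemma normF_le (x : X) : ‖normF x‖ ≤ 1 := (exists_dual_vector'' ℝ x).choose_spec.1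

lemma normF_eq (x : X) : normF x x = ‖x‖ := by
  have h := (exists_dual_vector'' ℝ x).choose_spec.2
  simpa [normF] using h

lemma floor_close {d v w : ℝ} (hd : 0 < d) (hv : 0 ≤ v) (hw : 0 ≤ w)
    (h : ⌊v / d⌋₊ = ⌊w / d⌋₊) : |v - w| ≤ d := by
  have h1 : v / d < ⌊v / d⌋₊ + 1 := Nat.lt_floor_add_one _
  have h2 : w / d < ⌊w / d⌋₊ + 1 := Nat.lt_floor_add_one _
  have h3 : (⌊v / d⌋₊ : ℝ) ≤ v / d := Nat.floor_le (by positivity)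
  have h4 : (⌊w / d⌋₊ : ℝ) ≤ w / d := Nat.floor_le (by positivity)
  rw [h] at h1 h3
  have hv' : v / d * d = v := div_mul_cancel₀ v hd.ne'
  have hw' : w / d * d = w := div_mul_cancel₀ w hd.ne'
  rw [abs_le]
  constructor <;> nlinarith [hd.le]

/-- The iterated-pigeonhole extraction: one can select an increasing subsequence together with a
pool so that each norming functional attached to a grid combination of earlier selected vectors
is nearly constant on all later candidates. -/
lemma extraction
    (lam η : ℝ)
    (k G R M : ℕ) (hR1 : 1 ≤ R) (hM : M = R ^ (G ^ k))
    (γ : (Fin k → Fin G) → ℕ → ℝ)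
    (m : ℕ) (hm : (2 * M) ^ k ≤ m)
    (b : ℕ → X)
    (hb : ∀ t, t < m → ‖b t‖ ≤ lam)
    (box : ℝ → Fin R)
    (hbox : ∀ v w : ℝ, |v| ≤ lam → |w| ≤ lam → box v = box w → |v - w| ≤ η) :
    ∀ l, l ≤ k → ∃ (s : ℕ → ℕ) (Q : Finset ℕ),
      (∀ j, j < l → s j < m) ∧
      (∀ i j, i < j → j < l → s i < s j) ∧
      (Q ⊆ Finset.range m) ∧
      ((2 * M) ^ (k - l) ≤ Q.card) ∧
      (∀ t ∈ Q, ∀ j, j < l → s j < t) ∧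
      (∀ l', 1 ≤ l' → l' ≤ l → ∀ i : Fin k → Fin G,
        ∀ t ∈ Q ∪ (Finset.Ico l' l).image s, ∀ t' ∈ Q ∪ (Finset.Ico l' l).image s,
          |normF (∑ j ∈ Finset.range l', γ i j • b (s j)) (b t)
            - normF (∑ j ∈ Finset.range l', γ i j • b (s j)) (b t')| ≤ η) := by
  classical
  have hM1 : 1 ≤ M := hM ▸ Nat.one_le_pow _ _ hR1
  intro l
  induction l with
  | zero =>
      intro _
      refine ⟨fun _ => 0, Finset.range m, ?_, ?_, le_refl _, by simpa using hm, ?_, ?_⟩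
      · intro j hj; omega
      · intro i j hij hj; omega
      · intro t ht j hj; omega
      · intro l' h1 h2; omega
  | succ l ih =>
      intro hlk
      have hl : l < k := hlk
      obtain ⟨s, Q, h1, h2, h3, h4, h5, h6⟩ := ih hl.le
      have hQne : Q.Nonempty := by
        rw [← Finset.card_pos]
        have : 1 ≤ (2 * M) ^ (k - l) := Nat.one_le_pow _ _ (by omega)
        omega
      set a := Q.min' hQne with ha
      have haQ : a ∈ Q := Q.min'_mem hQne
      set s' : ℕ → ℕ := Function.update s l a with hs'
      have hs'eq : ∀ j, j < l → s' j = s j := by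
        intro j hj; simp [hs', Function.update_of_ne (by omega : j ≠ l)]
      have hs'l : s' l = a := by simp [hs']
      -- the new pattern function
      set P : ℕ → ((Fin k → Fin G) → Fin R) :=
        fun t i => box (normF (∑ j ∈ Finset.range (l + 1), γ i j • b (s' j)) (b t)) with hP
      set Q1 := Q.erase a with hQ1
      have hQ1card : Q.card - 1 ≤ Q1.card := by
        rw [hQ1, Finset.card_erase_of_mem haQ]
      have hnonemptyR : Nonempty (Fin R) := ⟨⟨0, by omega⟩⟩
      have hcount : Fintype.card ((Fin k → Fin G) → Fin R) * (2 * M) ^ (k - (l + 1)) ≤ Q1.card := by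
        have hcard : Fintype.card ((Fin k → Fin G) → Fin R) = M := by
          simp [Fintype.card_fun, hM]
        rw [hcard]
        have hT1 : 1 ≤ (2 * M) ^ (k - (l + 1)) := Nat.one_le_pow _ _ (by omega)
        have hpow : (2 * M) ^ (k - l) = 2 * (M * (2 * M) ^ (k - (l + 1))) := by
          have hkl : k - l = (k - (l + 1)) + 1 := by omega
          rw [hkl, pow_succ]; ring
        have hMT : 1 ≤ M * (2 * M) ^ (k - (l + 1)) :=
          le_trans (by norm_num) (Nat.mul_le_mul hM1 hT1)
        omega
      obtain ⟨pat, -, hpat⟩ :=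
        Finset.exists_le_card_fiber_of_mul_le_card_of_maps_to
          (f := P) (t := Finset.univ) (fun x _ => Finset.mem_univ (P x))
          Finset.univ_nonempty (by simpa using hcount)
      set Q' := Q1.filter (fun t => P t = pat) with hQ'
      have hQ'sub1 : Q' ⊆ Q1 := Finset.filter_subset _ _
      have hQ'subQ : Q' ⊆ Q := hQ'sub1.trans (Finset.erase_subset _ _)
      have hagt : ∀ t ∈ Q', a < t := by
        intro t ht
        have htQ1 : t ∈ Q1 := hQ'sub1 ht
        have htne : t ≠ a := Finset.ne_of_mem_erase htQ1
        have := Q.min'_le t (hQ'subQ ht)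
        omega
      refine ⟨s', Q', ?_, ?_, hQ'subQ.trans h3, ?_, ?_, ?_⟩
      · intro j hj
        rcases Nat.lt_succ_iff_lt_or_eq.mp hj with hj' | hj'
        · rw [hs'eq j hj']; exact h1 j hj'
        · subst hj'; rw [hs'l]
          have := h3 haQ; simpa using this
      · intro i j hij hj
        rcases Nat.lt_succ_iff_lt_or_eq.mp hj with hj' | hj'
        · rw [hs'eq i (by omega), hs'eq j hj']; exact h2 i j hij hj'
        · subst hj'; rw [hs'eq i (by omega), hs'l]
          exact h5 a haQ i (by omega)
      · simpa using hpat
      · intro t ht j hj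
        rcases Nat.lt_succ_iff_lt_or_eq.mp hj with hj' | hj'
        · rw [hs'eq j hj']; exact h5 t (hQ'subQ ht) j hj'
        · subst hj'; rw [hs'l]; exact hagt t ht
      · intro l' hl'1 hl'2 i t ht t' ht'
        by_cases hcase : l' ≤ l
        · -- use the old property
          have hVeq : (∑ j ∈ Finset.range l', γ i j • b (s' j))
              = ∑ j ∈ Finset.range l', γ i j • b (s j) := by
            refine Finset.sum_congr rfl ?_
            intro j hj
            rw [hs'eq j (by simp at hj; omega)]
          have hmem : ∀ u, u ∈ Q' ∪ (Finset.Ico l' (l + 1)).image s' →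
              u ∈ Q ∪ (Finset.Ico l' l).image s := by
            intro u hu
            rcases Finset.mem_union.mp hu with hu | hu
            · exact Finset.mem_union_left _ (hQ'subQ hu)
            · obtain ⟨j, hj, rfl⟩ := Finset.mem_image.mp hu
              simp only [Finset.mem_Ico] at hj
              rcases Nat.lt_succ_iff_lt_or_eq.mp hj.2 with hj' | hj'
              · refine Finset.mem_union_right _ ?_
                rw [hs'eq j hj']
                exact Finset.mem_image.mpr ⟨j, Finset.mem_Ico.mpr ⟨hj.1, hj'⟩, rfl⟩
              · subst hj'; rw [hs'l]; exact Finset.mem_union_left _ haQ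
          rw [hVeq]
          exact h6 l' hl'1 hcase i _ (hmem t ht) _ (hmem t' ht')
        · -- l' = l + 1 : use the new pattern constancy
          have hl' : l' = l + 1 := by omega
          subst hl'
          have hmem : ∀ u, u ∈ Q' ∪ (Finset.Ico (l+1) (l + 1)).image s' → u ∈ Q' := by
            intro u hu
            rcases Finset.mem_union.mp hu with hu | hu
            · exact hu
            · simp at hu
          have htQ' := hmem t ht
          have ht'Q' := hmem t' ht'
          have hpt : P t = pat := (Finset.mem_filter.mp htQ').2
          have hpt' : P t' = pat := (Finset.mem_filter.mp ht'Q').2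
          have hbe : P t i = P t' i := congrFun (hpt.trans hpt'.symm) i
          have hbound : ∀ u ∈ Q',
              |normF (∑ j ∈ Finset.range (l+1), γ i j • b (s' j)) (b u)| ≤ lam := by
            intro u hu
            have hum : u < m := by
              have := h3 (hQ'subQ hu); simpa using this
            calc |normF (∑ j ∈ Finset.range (l+1), γ i j • b (s' j)) (b u)|
                ≤ ‖normF (∑ j ∈ Finset.range (l+1), γ i j • b (s' j))‖ * ‖b u‖ := by
                  rw [← Real.norm_eq_abs]
                  exact ContinuousLinearMap.le_opNorm _ _
              _ ≤ 1 * lam := by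
                  apply mul_le_mul (normF_le _) (hb u hum) (norm_nonneg _) zero_le_one
              _ = lam := one_mul lam
          exact hbox _ _ (hbound t htQ') (hbound t' ht'Q') hbe

set_option maxHeartbeats 2000000 in
/-- given `lam ≥ 1`, `ε > 0` and `k > 0`, there is `n > 0` such that in
every Banach space, every `lam`-triangular sequence of length at least `n` has a
subsequence of length `k` which is `((lam² + 1)/2 + ε)`-wide-(s). -/
theorem stmt_17 (lam ε : ℝ) (hlam : 1 ≤ lam) (hε : 0 < ε) (k : ℕ) (hk : 0 < k) :
    ∃ n : ℕ, 0 < n ∧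
      ∀ (X : Type u) [NormedAddCommGroup X] [NormedSpace ℝ X] [CompleteSpace X],
        ∀ (m : ℕ) (b : ℕ → X), n ≤ m → IsTriangularFinWith lam m b →
          ∃ s : ℕ → ℕ, StrictMono s ∧ (∀ j, j < k → s j < m) ∧
            IsWideSFinWith ((lam ^ 2 + 1) / 2 + ε) k (fun j => b (s j)) := by
  classical
  have hlam0 : (0:ℝ) ≤ lam := by linarith
  have hk1 : (1:ℝ) ≤ (k:ℝ) := by exact_mod_cast hk
  have hklam : (0:ℝ) < 2 * (k:ℝ) * lam := by positivity
  set η : ℝ := ε / (2 * (k:ℝ) * lam) with hη_def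
  have hη : 0 < η := div_pos hε hklam
  set G : ℕ := ⌈4 * lam / η⌉₊ + 1 with hG_def
  set R : ℕ := ⌈2 * lam / η⌉₊ + 1 with hR_def
  set M : ℕ := R ^ (G ^ k) with hM_def
  have hM1 : 1 ≤ M := Nat.one_le_pow _ _ (by omega)
  refine ⟨(2 * M) ^ k, pow_pos (by omega) k, ?_⟩
  intro X _ _ _ m b hm htri
  obtain ⟨f, hf1, hf2, hf3, hf4⟩ := htri
  -- grid coefficients
  set γ : (Fin k → Fin G) → ℕ → ℝ :=
    fun i j => if h : j < k then (-(2 * lam) + ((i ⟨j, h⟩ : ℕ) : ℝ) * η) else 0 with hγ_def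
  -- box function for the pigeonhole
  set box : ℝ → Fin R := fun v =>
    ⟨min ⌊(v + lam) / η⌋₊ (R - 1), lt_of_le_of_lt (min_le_right _ _) (by omega)⟩ with hbox_def
  have hboxp : ∀ v w : ℝ, |v| ≤ lam → |w| ≤ lam → box v = box w → |v - w| ≤ η := by
    intro v w hv hw hvw
    have hfl : ∀ u : ℝ, |u| ≤ lam → ⌊(u + lam) / η⌋₊ ≤ R - 1 := by
      intro u hu
      obtain ⟨hu1, hu2⟩ := abs_le.mp hu
      calc ⌊(u + lam) / η⌋₊ ≤ ⌊2 * lam / η⌋₊ :=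
            Nat.floor_mono ((div_le_div_iff_of_pos_right hη).mpr (by linarith))
        _ ≤ ⌈2 * lam / η⌉₊ := Nat.floor_le_ceil _
        _ = R - 1 := by omega
    have h2 : ⌊(v + lam) / η⌋₊ = ⌊(w + lam) / η⌋₊ := by
      have hval := congrArg Fin.val hvw
      simp only [hbox_def] at hval
      rwa [min_eq_left (hfl v hv), min_eq_left (hfl w hw)] at hval
    have h3 := floor_close hη (by linarith [(abs_le.mp hv).1])
      (by linarith [(abs_le.mp hw).1]) h2
    have he : v + lam - (w + lam) = v - w := by ring
    rwa [he] at h3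
  -- grid point selection
  set grid : ℝ → ℕ := fun v => min ⌊(v + 2 * lam) / η⌋₊ (G - 1) with hgrid_def
  have hgrid1 : ∀ v, grid v < G := fun v => lt_of_le_of_lt (min_le_right _ _) (by omega)
  have hgrid2 : ∀ v : ℝ, |v| ≤ 2 * lam → |(-(2 * lam) + (grid v : ℝ) * η) - v| ≤ η := by
    intro v hv
    obtain ⟨hv1, hv2⟩ := abs_le.mp hv
    have hfl : ⌊(v + 2 * lam) / η⌋₊ ≤ G - 1 := by
      calc ⌊(v + 2 * lam) / η⌋₊ ≤ ⌊4 * lam / η⌋₊ :=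
            Nat.floor_mono ((div_le_div_iff_of_pos_right hη).mpr (by linarith))
        _ ≤ ⌈4 * lam / η⌉₊ := Nat.floor_le_ceil _
        _ = G - 1 := by omega
    have hmin : grid v = ⌊(v + 2 * lam) / η⌋₊ := by
      simp only [hgrid_def]; exact min_eq_left hfl
    rw [hmin]
    have h0 : (0:ℝ) ≤ (v + 2 * lam) / η := div_nonneg (by linarith) hη.le
    have h3 : (⌊(v + 2 * lam) / η⌋₊ : ℝ) ≤ (v + 2 * lam) / η := Nat.floor_le h0
    have h4 : (v + 2 * lam) / η < ⌊(v + 2 * lam) / η⌋₊ + 1 := Nat.lt_floor_add_one _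
    have hmul : (v + 2 * lam) / η * η = v + 2 * lam := div_mul_cancel₀ _ hη.ne'
    rw [abs_le]
    constructor <;> nlinarith [hη.le]
  -- apply the extraction lemma
  obtain ⟨s, Q, hs_m, hs_mono, hQm, hQcard, hQgt, hnet⟩ :=
    extraction lam η k G R M (by omega) hM_def γ m hm b hf4 box hboxp k le_rfl
  -- extend to a globally strictly monotone sequence
  set sfin : ℕ → ℕ := fun j => if j < k then s j else s (k - 1) + (j + 1 - k) with hsfin_def
  have hs_eq : ∀ j, j < k → sfin j = s j := by
    intro j hj; simp only [hsfin_def]; rw [if_pos hj]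
  have hmono : StrictMono sfin := by
    apply strictMono_nat_of_lt_succ
    intro j
    rcases lt_trichotomy (j + 1) k with h | h | h
    · rw [hs_eq j (by omega), hs_eq (j + 1) h]
      exact hs_mono j (j + 1) (by omega) h
    · rw [hs_eq j (by omega)]
      simp only [hsfin_def]
      rw [if_neg (by omega)]
      have hj : j = k - 1 := by omega
      rw [hj]
      omega
    · simp only [hsfin_def]
      rw [if_neg (by omega), if_neg (by omega)]
      omega
  -- evaluation of the triangular functionals on combinations of the subsequence
  have hx_eval : ∀ (c : ℕ → ℝ) (n : ℕ), n ≤ k → ∀ j0, j0 < n →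
      f (s j0) (∑ j ∈ Finset.range n, c j • b (sfin j)) = ∑ j ∈ Finset.Ico j0 n, c j := by
    intro c n hnk j0 hj0
    rw [map_sum]
    have hterm : ∀ j ∈ Finset.range n,
        f (s j0) (c j • b (sfin j)) = if j0 ≤ j then c j else 0 := by
      intro j hj
      rw [Finset.mem_range] at hj
      rw [hs_eq j (by omega), map_smul, smul_eq_mul]
      by_cases hcase : j0 ≤ j
      · rw [if_pos hcase, hf1 (s j0) (s j) ?_ (hs_m j (by omega)), mul_one]
        rcases eq_or_lt_of_le hcase with h | h
        · rw [h]
        · exact (hs_mono j0 j h (by omega)).le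
      · rw [if_neg hcase,
          hf2 (s j0) (s j) (hs_mono j j0 (by omega) (by omega)) (hs_m j0 (by omega)), mul_zero]
    rw [Finset.sum_congr rfl hterm]
    have hIco : Finset.Ico j0 n = (Finset.range n).filter (fun j => j0 ≤ j) := by
      ext j
      simp only [Finset.mem_Ico, Finset.mem_filter, Finset.mem_range]
      omega
    rw [hIco, Finset.sum_filter]
  -- tail sums are controlled
  have hT : ∀ (c : ℕ → ℝ) (n : ℕ), n ≤ k → ∀ j0, j0 ≤ n →
      |∑ j ∈ Finset.Ico j0 n, c j| ≤ lam * ‖∑ j ∈ Finset.range n, c j • b (sfin j)‖ := by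
    intro c n hnk j0 hj0
    rcases eq_or_lt_of_le hj0 with h | h
    · rw [h, Finset.Ico_self, Finset.sum_empty, abs_zero]
      exact mul_nonneg hlam0 (norm_nonneg _)
    · rw [← hx_eval c n hnk j0 h]
      calc |f (s j0) (∑ j ∈ Finset.range n, c j • b (sfin j))|
          = ‖f (s j0) (∑ j ∈ Finset.range n, c j • b (sfin j))‖ := (Real.norm_eq_abs _).symm
        _ ≤ ‖f (s j0)‖ * ‖∑ j ∈ Finset.range n, c j • b (sfin j)‖ :=
            ContinuousLinearMap.le_opNorm _ _
        _ ≤ lam * ‖∑ j ∈ Finset.range n, c j • b (sfin j)‖ :=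
            mul_le_mul_of_nonneg_right (hf3 (s j0) (hs_m j0 (by omega))) (norm_nonneg _)
  -- coefficients are controlled
  have hcoef : ∀ (c : ℕ → ℝ) (n : ℕ), n ≤ k → ∀ j, j < n →
      |c j| ≤ 2 * lam * ‖∑ j ∈ Finset.range n, c j • b (sfin j)‖ := by
    intro c n hnk j hj
    have e1 := Finset.sum_eq_sum_Ico_succ_bot hj c
    have t1 := hT c n hnk j hj.le
    have t2 := hT c n hnk (j + 1) hj
    rw [e1] at t1
    have h := abs_add_le (c j + ∑ jj ∈ Finset.Ico (j + 1) n, c jj)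
      (-(∑ jj ∈ Finset.Ico (j + 1) n, c jj))
    rw [abs_neg] at h
    have he : c j + (∑ jj ∈ Finset.Ico (j + 1) n, c jj)
        + -(∑ jj ∈ Finset.Ico (j + 1) n, c jj) = c j := by ring
    rw [he] at h
    calc |c j| ≤ |c j + ∑ jj ∈ Finset.Ico (j + 1) n, c jj|
        + |∑ jj ∈ Finset.Ico (j + 1) n, c jj| := h
      _ ≤ lam * ‖∑ j ∈ Finset.range n, c j • b (sfin j)‖
        + lam * ‖∑ j ∈ Finset.range n, c j • b (sfin j)‖ := add_le_add t1 t2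
      _ = 2 * lam * ‖∑ j ∈ Finset.range n, c j • b (sfin j)‖ := by ring
  have hC0 : (0:ℝ) ≤ (lam ^ 2 + 1) / 2 + ε := by nlinarith
  have hlamC : lam ≤ (lam ^ 2 + 1) / 2 + ε := by nlinarith [sq_nonneg (lam - 1)]
  have hklamη : (k:ℝ) * lam * η = ε / 2 := by
    rw [hη_def]
    field_simp
  refine ⟨sfin, hmono, ?_, ?_, ?_, ?_⟩
  · -- bounds on indices
    intro j hj; rw [hs_eq j hj]; exact hs_m j hj
  · -- (a) the basic inequality
    intro c k' n hk'n hnk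
    simp only []
    by_cases hk'0 : k' = 0
    · rw [hk'0]
      simp only [Finset.range_zero, Finset.sum_empty, norm_zero]
      exact mul_nonneg (by nlinarith) (norm_nonneg _)
    rcases eq_or_lt_of_le hk'n with heq | hlt
    · rw [heq]
      have h2C : (1:ℝ) ≤ 2 * ((lam ^ 2 + 1) / 2 + ε) := by nlinarith
      exact le_mul_of_one_le_left (norm_nonneg _) h2C
    -- main case : 0 < k' < n ≤ k
    set xx := ∑ j ∈ Finset.range n, c j • b (sfin j) with hxx_def
    set y := ∑ j ∈ Finset.range k', c j • b (sfin j) with hy_def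
    by_cases hxx0 : ‖xx‖ = 0
    · have hy0 : y = 0 := by
        rw [hy_def]
        apply Finset.sum_eq_zero
        intro j hj
        rw [Finset.mem_range] at hj
        have hcj := hcoef c n hnk j (by omega)
        rw [← hxx_def, hxx0, mul_zero] at hcj
        have : c j = 0 := abs_eq_zero.mp (le_antisymm hcj (abs_nonneg _))
        rw [this, zero_smul]
      rw [hy0, norm_zero]
      exact mul_nonneg (by nlinarith) (norm_nonneg _)
    have hxxpos : 0 < ‖xx‖ := lt_of_le_of_ne (norm_nonneg _) (Ne.symm hxx0)
    set u : ℕ → ℝ := fun j => c j / ‖xx‖ with hu_def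
    have hu : ∀ j, j < n → |u j| ≤ 2 * lam := by
      intro j hj
      simp only [hu_def]
      rw [abs_div, abs_norm, div_le_iff₀ hxxpos]
      have := hcoef c n hnk j hj
      rw [← hxx_def] at this
      linarith
    set i : Fin k → Fin G := fun jf => ⟨grid (u jf.val), hgrid1 _⟩ with hi_def
    have hγi : ∀ j, (hjk : j < k) → γ i j = -(2 * lam) + (grid (u j) : ℝ) * η := by
      intro j hjk
      simp only [hγ_def, hi_def, dif_pos hjk]
    have hgood : ∀ j, j < k' → |γ i j - u j| ≤ η := by
      intro j hj
      rw [hγi j (by omega)]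
      exact hgrid2 (u j) (hu j (by omega))
    set V := ∑ j ∈ Finset.range k', γ i j • b (s j) with hV_def
    set φ := normF V with hφ_def
    have hφ1 : ‖φ‖ ≤ 1 := normF_le V
    have hφV : φ V = ‖V‖ := normF_eq V
    have hz : ‖xx‖⁻¹ • y = ∑ j ∈ Finset.range k', u j • b (sfin j) := by
      rw [hy_def, Finset.smul_sum]
      refine Finset.sum_congr rfl fun j hj => ?_
      rw [smul_smul]
      congr 1
      simp only [hu_def]
      rw [div_eq_inv_mul]
    have happrox : ‖V - ‖xx‖⁻¹ • y‖ ≤ (k:ℝ) * lam * η := by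
      rw [hz, hV_def, ← Finset.sum_sub_distrib]
      have hterm : ∀ j ∈ Finset.range k',
          γ i j • b (s j) - u j • b (sfin j) = (γ i j - u j) • b (s j) := by
        intro j hj
        rw [Finset.mem_range] at hj
        rw [hs_eq j (by omega), sub_smul]
      rw [Finset.sum_congr rfl hterm]
      calc ‖∑ j ∈ Finset.range k', (γ i j - u j) • b (s j)‖
          ≤ ∑ j ∈ Finset.range k', ‖(γ i j - u j) • b (s j)‖ := norm_sum_le _ _
        _ ≤ ∑ _j ∈ Finset.range k', η * lam := by
            apply Finset.sum_le_sum
            intro j hj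
            rw [Finset.mem_range] at hj
            rw [norm_smul, Real.norm_eq_abs]
            exact mul_le_mul (hgood j hj) (hf4 _ (hs_m j (by omega))) (norm_nonneg _) hη.le
        _ = (k':ℝ) * (η * lam) := by
            rw [Finset.sum_const, Finset.card_range, nsmul_eq_mul]
        _ ≤ (k:ℝ) * lam * η := by
            have hkk : (k':ℝ) ≤ (k:ℝ) := by exact_mod_cast (by omega : k' ≤ k)
            nlinarith [hη.le]
    have hdiffbd : |φ (V - ‖xx‖⁻¹ • y)| ≤ (k:ℝ) * lam * η := by
      calc |φ (V - ‖xx‖⁻¹ • y)| ≤ ‖φ‖ * ‖V - ‖xx‖⁻¹ • y‖ := by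
            rw [← Real.norm_eq_abs]
            exact ContinuousLinearMap.le_opNorm _ _
        _ ≤ 1 * ((k:ℝ) * lam * η) := mul_le_mul hφ1 happrox (norm_nonneg _) zero_le_one
        _ = (k:ℝ) * lam * η := one_mul _
    have hVnorm : ‖xx‖⁻¹ * ‖y‖ - (k:ℝ) * lam * η ≤ ‖V‖ := by
      have h := norm_sub_norm_le (‖xx‖⁻¹ • y) V
      rw [norm_sub_rev] at h
      have hz2 : ‖‖xx‖⁻¹ • y‖ = ‖xx‖⁻¹ * ‖y‖ := by
        rw [norm_smul, Real.norm_eq_abs, abs_of_nonneg (inv_nonneg.mpr (norm_nonneg _))]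
      rw [hz2] at h
      linarith [happrox]
    have hφz : ‖xx‖⁻¹ * ‖y‖ - 2 * ((k:ℝ) * lam * η) ≤ φ (‖xx‖⁻¹ • y) := by
      have e : φ (‖xx‖⁻¹ • y) = φ V - φ (V - ‖xx‖⁻¹ • y) := by
        rw [map_sub]; ring
      rw [e, hφV]
      have := abs_le.mp hdiffbd
      linarith [hVnorm]
    have hφy : ‖y‖ - 2 * ((k:ℝ) * lam * η) * ‖xx‖ ≤ φ y := by
      have e : φ (‖xx‖⁻¹ • y) = ‖xx‖⁻¹ * φ y := by rw [map_smul, smul_eq_mul]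
      rw [e] at hφz
      have h := mul_le_mul_of_nonneg_left hφz (norm_nonneg xx)
      have hinv : ‖xx‖ * ‖xx‖⁻¹ = 1 := mul_inv_cancel₀ hxx0
      have h2 : ‖xx‖ * (‖xx‖⁻¹ * ‖y‖ - 2 * ((k:ℝ) * lam * η))
          = ‖xx‖ * ‖xx‖⁻¹ * ‖y‖ - 2 * ((k:ℝ) * lam * η) * ‖xx‖ := by ring
      have h3 : ‖xx‖ * (‖xx‖⁻¹ * φ y) = ‖xx‖ * ‖xx‖⁻¹ * φ y := by ring
      rw [h2, h3, hinv, one_mul, one_mul] at h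
      exact h
    have hsplit : φ xx = φ y + ∑ j ∈ Finset.Ico k' n, c j * φ (b (s j)) := by
      have hxy : xx = y + ∑ j ∈ Finset.Ico k' n, c j • b (sfin j) := by
        rw [hxx_def, hy_def, Finset.sum_range_add_sum_Ico _ hk'n]
      rw [hxy, map_add]
      congr 1
      rw [map_sum]
      refine Finset.sum_congr rfl fun j hj => ?_
      rw [Finset.mem_Ico] at hj
      rw [hs_eq j (by omega), map_smul, smul_eq_mul]
    set μ := φ (b (s k')) with hμ_def
    have hμ : |μ| ≤ lam := by
      calc |μ| ≤ ‖φ‖ * ‖b (s k')‖ := by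
            rw [hμ_def, ← Real.norm_eq_abs]
            exact ContinuousLinearMap.le_opNorm _ _
        _ ≤ 1 * lam := mul_le_mul hφ1 (hf4 _ (hs_m k' (by omega))) (norm_nonneg _) zero_le_one
        _ = lam := one_mul _
    have hclose : ∀ j ∈ Finset.Ico k' n, |φ (b (s j)) - μ| ≤ η := by
      intro j hj
      rw [Finset.mem_Ico] at hj
      have hmem1 : s j ∈ Q ∪ (Finset.Ico k' k).image s :=
        Finset.mem_union_right _
          (Finset.mem_image.mpr ⟨j, Finset.mem_Ico.mpr ⟨hj.1, by omega⟩, rfl⟩)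
      have hmem2 : s k' ∈ Q ∪ (Finset.Ico k' k).image s :=
        Finset.mem_union_right _
          (Finset.mem_image.mpr ⟨k', Finset.mem_Ico.mpr ⟨le_refl _, by omega⟩, rfl⟩)
      have h := hnet k' (by omega) (by omega) i (s j) hmem1 (s k') hmem2
      rw [hμ_def, hφ_def, hV_def]
      exact h
    have htail : |∑ j ∈ Finset.Ico k' n, c j * φ (b (s j))|
        ≤ lam ^ 2 * ‖xx‖ + (k:ℝ) * (2 * lam * ‖xx‖ * η) := by
      have hdecomp : ∑ j ∈ Finset.Ico k' n, c j * φ (b (s j))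
          = (∑ j ∈ Finset.Ico k' n, c j) * μ
            + ∑ j ∈ Finset.Ico k' n, c j * (φ (b (s j)) - μ) := by
        rw [Finset.sum_mul, ← Finset.sum_add_distrib]
        refine Finset.sum_congr rfl fun j hj => by ring
      rw [hdecomp]
      have hTk' := hT c n hnk k' hk'n
      rw [← hxx_def] at hTk'
      have h1 : |(∑ j ∈ Finset.Ico k' n, c j) * μ| ≤ lam ^ 2 * ‖xx‖ := by
        rw [abs_mul]
        calc |∑ j ∈ Finset.Ico k' n, c j| * |μ| ≤ (lam * ‖xx‖) * lam :=
              mul_le_mul hTk' hμ (abs_nonneg _) (mul_nonneg hlam0 (norm_nonneg _))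
          _ = lam ^ 2 * ‖xx‖ := by ring
      have h2 : |∑ j ∈ Finset.Ico k' n, c j * (φ (b (s j)) - μ)|
          ≤ (k:ℝ) * (2 * lam * ‖xx‖ * η) := by
        calc |∑ j ∈ Finset.Ico k' n, c j * (φ (b (s j)) - μ)|
            ≤ ∑ j ∈ Finset.Ico k' n, |c j * (φ (b (s j)) - μ)| :=
              Finset.abs_sum_le_sum_abs _ _
          _ ≤ ∑ _j ∈ Finset.Ico k' n, 2 * lam * ‖xx‖ * η := by
              apply Finset.sum_le_sum
              intro j hj
              rw [abs_mul]
              have hj' := Finset.mem_Ico.mp hj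
              have hcj := hcoef c n hnk j hj'.2
              rw [← hxx_def] at hcj
              exact mul_le_mul hcj (hclose j hj) (abs_nonneg _)
                (by positivity)
          _ = ((n - k' : ℕ):ℝ) * (2 * lam * ‖xx‖ * η) := by
              rw [Finset.sum_const, Nat.card_Ico, nsmul_eq_mul]
          _ ≤ (k:ℝ) * (2 * lam * ‖xx‖ * η) := by
              apply mul_le_mul_of_nonneg_right _ (by positivity)
              exact_mod_cast le_trans (Nat.sub_le n k') hnk
      calc |(∑ j ∈ Finset.Ico k' n, c j) * μ
            + ∑ j ∈ Finset.Ico k' n, c j * (φ (b (s j)) - μ)|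
          ≤ |(∑ j ∈ Finset.Ico k' n, c j) * μ|
            + |∑ j ∈ Finset.Ico k' n, c j * (φ (b (s j)) - μ)| := abs_add_le _ _
        _ ≤ lam ^ 2 * ‖xx‖ + (k:ℝ) * (2 * lam * ‖xx‖ * η) := add_le_add h1 h2
    have hφxx : φ xx ≤ ‖xx‖ := by
      calc φ xx ≤ |φ xx| := le_abs_self _
        _ ≤ ‖φ‖ * ‖xx‖ := by
            rw [← Real.norm_eq_abs]
            exact ContinuousLinearMap.le_opNorm _ _
        _ ≤ 1 * ‖xx‖ := mul_le_mul_of_nonneg_right hφ1 (norm_nonneg _)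
        _ = ‖xx‖ := one_mul _
    have e1 : 2 * ((k:ℝ) * lam * η) * ‖xx‖ = ε * ‖xx‖ := by rw [hklamη]; ring
    have e2 : (k:ℝ) * (2 * lam * ‖xx‖ * η) = ε * ‖xx‖ := by
      have h : (k:ℝ) * (2 * lam * ‖xx‖ * η) = 2 * ((k:ℝ) * lam * η) * ‖xx‖ := by ring
      rw [h, hklamη]; ring
    have e3 : 2 * ((lam ^ 2 + 1) / 2 + ε) * ‖xx‖
        = lam ^ 2 * ‖xx‖ + ‖xx‖ + 2 * (ε * ‖xx‖) := by ring
    have habs := abs_le.mp htail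
    rw [e3]
    linarith [hφy, hφxx, habs.1, habs.2, hsplit, e1, e2]
  · -- (b) norm bounds
    intro j hj
    simp only []
    rw [hs_eq j hj]
    exact (hf4 _ (hs_m j hj)).trans hlamC
  · -- (c) the wide-(s) lower estimate
    intro c k' n hk'n hnk
    simp only []
    calc |∑ j ∈ Finset.Ico k' n, c j|
        ≤ lam * ‖∑ j ∈ Finset.range n, c j • b (sfin j)‖ := hT c n hnk k' hk'n
      _ ≤ ((lam ^ 2 + 1) / 2 + ε) * ‖∑ j ∈ Finset.range n, c j • b (sfin j)‖ :=
          mul_le_mul_of_nonneg_right hlamC (norm_nonneg _)
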